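/- arXiv:2604.13916 — 3 statements merged into one kernel-verified Lean document; each statement's English description precedes it below -/
import Mathlib

section
/- In the coproduct monoid ⟨X⟩ * [Y], if vw = v'w' with |v| = |v'|, |w| = |w'|, and v contains at least one variable from X (v is non-pure), then the commuting prefixes agree: p(v) = p(v'). -/
/-- Words over `X ⊔ Y`. -/
abbrev FM (X Y : Type) := FreeMonoid (X ⊕ Y)

/-- Swapping two adjacent `Y`-letters. -/
def yRel (X Y : Type) : FM X Y → FM X Y → Prop := fun a b =>
  ∃ (u v : FM X Y) (y₁ y₂ : Y),
    a = u * FreeMonoid.of (Sum.inr y₁) * FreeMonoid.of (Sum.inr y₂) * v ∧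
    b = u * FreeMonoid.of (Sum.inr y₂) * FreeMonoid.of (Sum.inr y₁) * v

/-- The congruence generated by swaps of adjacent `Y`-letters. -/
def coCon (X Y : Type) : Con (FM X Y) := conGen (yRel X Y)

/-- The coproduct monoid `⟨X⟩ * [Y]`. -/
abbrev CoprodM (X Y : Type) := (coCon X Y).Quotient

/-- Length descends to the quotient. -/
def lenHom (X Y : Type) : CoprodM X Y →* Multiplicative ℕ :=
  Con.lift _ (FreeMonoid.lift fun _ => Multiplicative.ofAdd 1) (by
    refine Con.conGen_le.2 ?_
    rintro a b ⟨u, v, y₁, y₂, rfl, rfl⟩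
    simp [Con.ker_rel, map_mul])

/-- Length of an element of the coproduct monoid. -/
def len {X Y : Type} (w : CoprodM X Y) : ℕ := Multiplicative.toAdd (lenHom X Y w)

/-- A monoid recording the commuting prefix and suffix. -/
inductive PS (Y : Type) where
  | pure : Multiset Y → PS Y
  | mixed : Multiset Y → Multiset Y → PS Y

def PS.mul {Y : Type} : PS Y → PS Y → PS Y
  | .pure c, .pure d => .pure (c + d)
  | .pure c, .mixed p s => .mixed (c + p) s
  | .mixed p s, .pure d => .mixed p (s + d)
  | .mixed p _, .mixed _ s' => .mixed p s'

instance {Y : Type} : Monoid (PS Y) where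
  mul := PS.mul
  one := .pure 0
  mul_assoc a b c := by
    rcases a <;> rcases b <;> rcases c <;>
      simp [(· * ·), PS.mul, add_assoc]
  one_mul a := by rcases a <;> simp [(· * ·), PS.mul]
  mul_one a := by rcases a <;> simp [(· * ·), PS.mul]

/-- The prefix/suffix data descends to the quotient. -/
def psHom (X Y : Type) : CoprodM X Y →* PS Y :=
  Con.lift _ (FreeMonoid.lift fun a =>
      match a with
      | Sum.inl _ => PS.mixed 0 0
      | Sum.inr y => PS.pure {y}) (by
    refine Con.conGen_le.2 ?_
    rintro a b ⟨u, v, y₁, y₂, rfl, rfl⟩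
    have key : (PS.pure {y₁} : PS Y) * PS.pure {y₂} = PS.pure {y₂} * PS.pure {y₁} := by
      show PS.mul _ _ = PS.mul _ _
      simp [PS.mul, add_comm]
    simp only [Con.ker_rel, map_mul, FreeMonoid.lift_eval_of]
    rw [mul_assoc _ (PS.pure {y₁}), key, mul_assoc, ← mul_assoc, ← mul_assoc])

/-- The commuting prefix of an element, as a multiset of `Y`-variables. -/
def pre {X Y : Type} (w : CoprodM X Y) : Multiset Y :=
  match psHom X Y w with
  | .pure c => c
  | .mixed p _ => p

/-- The commuting suffix of an element, as a multiset of `Y`-variables. -/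
def suf {X Y : Type} (w : CoprodM X Y) : Multiset Y :=
  match psHom X Y w with
  | .pure c => c
  | .mixed _ s => s

/-- The canonical embedding of the free abelian monoid `[Y]` (words in `Y`). -/
def yEmb (X Y : Type) : FreeMonoid Y →* CoprodM X Y :=
  (Con.mk' (coCon X Y)).comp (FreeMonoid.map Sum.inr)

/-- An element is pure if it involves only `Y`-variables. -/
def IsPure {X Y : Type} (w : CoprodM X Y) : Prop := w ∈ MonoidHom.mrange (yEmb X Y)

/-- The pure element of the coproduct monoid corresponding to a multiset of
`Y`-variables. -/
noncomputable def pureElt {X Y : Type} (c : Multiset Y) : CoprodM X Y :=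
  yEmb X Y (FreeMonoid.ofList c.toList)

/-- The equivalence relation `∼`: equal lengths and either both pure, or equal
prefix lengths, equal middle parts and equal suffix lengths. -/
noncomputable def Sim {X Y : Type} (u v : CoprodM X Y) : Prop :=
  len u = len v ∧
  ((IsPure u ∧ IsPure v) ∨
    (¬ IsPure u ∧ ¬ IsPure v ∧
      Multiset.card (pre u) = Multiset.card (pre v) ∧
      Multiset.card (suf u) = Multiset.card (suf v) ∧
      ∃ m : CoprodM X Y,
        u = pureElt (pre u) * m * pureElt (suf u) ∧
        v = pureElt (pre v) * m * pureElt (suf v)))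

/-!
A non-pure `u` has `p(u * w) = p(u)`, and always `p(u) ≤ p(u * w)`; moreover `|p(u)| = |u|` for
pure `u` and `|p(u)| < |u|` otherwise. So `v'` cannot be pure, since then
`|v'| = |p(v')| ≤ |p(v'w')| = |p(vw)| = |p(v)| < |v| = |v'|`, and therefore
`p(v) = p(vw) = p(v'w') = p(v')`.
-/

namespace CoprodM

variable {X Y : Type}

def of (x : X ⊕ Y) : CoprodM X Y := (coCon X Y).mk' (FreeMonoid.of x)

@[elab_as_elim]
theorem induction_on {motive : CoprodM X Y → Prop} (u : CoprodM X Y) (one : motive 1)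
    (of_mul : ∀ x u, motive u → motive (of x * u)) : motive u := by
  obtain ⟨a, rfl⟩ := Con.mk'_surjective u
  induction a using FreeMonoid.recOn with
  | one => exact one
  | of_mul x a ih => rw [map_mul]; exact of_mul x _ ih

end CoprodM

open CoprodM

variable {X Y : Type}

theorem len_mul (u w : CoprodM X Y) : len (u * w) = len u + len w := by
  simp only [len, map_mul, toAdd_mul]

theorem len_of (x : X ⊕ Y) : len (of x : CoprodM X Y) = 1 := rfl

theorem psHom_of_inr (y : Y) : psHom X Y (of (.inr y) : CoprodM X Y) = .pure {y} := rfl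

theorem yEmb_of_mul (y : Y) (g : FreeMonoid Y) :
    yEmb X Y (.of y * g) = of (.inr y) * yEmb X Y g := by
  rw [map_mul]; rfl

theorem psHom_yEmb (g : FreeMonoid Y) :
    psHom X Y (yEmb X Y g) = .pure (g.toList : Multiset Y) := by
  induction g using FreeMonoid.recOn with
  | one => rfl
  | of_mul y g ih =>
    rw [yEmb_of_mul, map_mul, ih, psHom_of_inr, FreeMonoid.toList_of_mul]
    rfl

theorem len_yEmb (g : FreeMonoid Y) : len (yEmb X Y g) = g.length := by
  induction g using FreeMonoid.recOn with
  | one => rfl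
  | of_mul y g ih => rw [yEmb_of_mul, len_mul, ih, len_of, FreeMonoid.length_mul,
      FreeMonoid.length_of, add_comm]

theorem isPure_of_psHom_eq_pure {u : CoprodM X Y} {c : Multiset Y}
    (h : psHom X Y u = .pure c) : IsPure u := by
  induction u using CoprodM.induction_on generalizing c with
  | one => exact ⟨1, map_one _⟩
  | of_mul x u ih =>
    rcases x with x | y <;> rcases hu : psHom X Y u with d | ⟨p, s⟩ <;>
      rw [map_mul, hu] at h <;> try cases h
    obtain ⟨g, rfl⟩ := ih hu
    exact ⟨.of y * g, yEmb_of_mul y g⟩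

theorem card_lt_len_of_psHom_eq_mixed {u : CoprodM X Y} {p s : Multiset Y}
    (h : psHom X Y u = .mixed p s) : Multiset.card p < len u := by
  induction u using CoprodM.induction_on generalizing p s with
  | one => cases h
  | of_mul x u ih =>
    rw [len_mul, len_of]
    rcases x with x | y <;> rcases hu : psHom X Y u with d | ⟨p', s'⟩ <;>
      rw [map_mul, hu] at h <;> cases h
    · simp
    · simp
    · simpa [add_comm] using ih hu

theorem exists_psHom_eq_mixed {u : CoprodM X Y} (hu : ¬ IsPure u) :
    ∃ p s, psHom X Y u = .mixed p s := by
  rcases h : psHom X Y u with c | ⟨p, s⟩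
  · exact absurd (isPure_of_psHom_eq_pure h) hu
  · exact ⟨p, s, rfl⟩

theorem pre_mul_of_not_isPure {u : CoprodM X Y} (hu : ¬ IsPure u) (w : CoprodM X Y) :
    pre (u * w) = pre u := by
  obtain ⟨p, s, h⟩ := exists_psHom_eq_mixed hu
  rcases hw : psHom X Y w with d | ⟨p', s'⟩ <;> simp only [pre, map_mul, h, hw] <;> rfl

theorem pre_le_pre_mul (u w : CoprodM X Y) : pre u ≤ pre (u * w) := by
  rcases hu : psHom X Y u with c | ⟨p, s⟩ <;> rcases hw : psHom X Y w with d | ⟨p', s'⟩ <;>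
    simp only [pre, map_mul, hu, hw] <;> first | exact le_rfl | exact Multiset.le_add_right _ _

theorem card_pre_lt_len {u : CoprodM X Y} (hu : ¬ IsPure u) : Multiset.card (pre u) < len u := by
  obtain ⟨p, s, h⟩ := exists_psHom_eq_mixed hu
  simpa only [pre, h] using card_lt_len_of_psHom_eq_mixed h

theorem card_pre_of_isPure {u : CoprodM X Y} (hu : IsPure u) : Multiset.card (pre u) = len u := by
  obtain ⟨g, rfl⟩ := hu
  simp only [pre, psHom_yEmb, len_yEmb, Multiset.coe_card, FreeMonoid.length]

theorem coprodM_pre_eq_of_mul_eq_general {X Y : Type} (v w v' w' : CoprodM X Y)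
    (h : v * w = v' * w') (hv : len v = len v')
    (hnp : ¬ IsPure v) :
    pre v = pre v' := by
  have hpre : pre (v * w) = pre v := pre_mul_of_not_isPure hnp w
  have hv' : ¬ IsPure v' := by
    intro hpure
    have hle := Multiset.card_le_card (pre_le_pre_mul v' w')
    rw [← h, hpre, card_pre_of_isPure hpure] at hle
    exact absurd (card_pre_lt_len hnp) (by omega)
  rw [← hpre, h, pre_mul_of_not_isPure hv']

/-- Lemma 3.5(ii): if `vw = v'w'` with `|v| = |v'|`, `|w| = |w'|` and `v`
non-pure, then `p(v) = p(v')`. -/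
theorem coprodM_pre_eq_of_mul_eq {X Y : Type} (v w v' w' : CoprodM X Y)
    (h : v * w = v' * w') (hv : len v = len v') (hw : len w = len w')
    (hnp : ¬ IsPure v) :
    pre v = pre v' :=
  coprodM_pre_eq_of_mul_eq_general v w v' w' h hv hnp
end

section
/- In the coproduct monoid ⟨X⟩ * [Y], if vw = v'w' with |v| = |v'| and |w| = |w'|, then s(v)p(w) = s(v')p(w') in [Y]. -/
/-!
Represent elements by words and cut a word after its first `k` letters. The `Y`-letters
touching the cut, `s(left part) + p(right part)`, do not change when two adjacent `Y`-letters
are swapped: a swap on one side of the cut does not change that side in `⟨X⟩ * [Y]`, and a swap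
across the cut only moves one letter from one multiset to the other. Since such swaps generate
the congruence, equal products `vw = v'w'` with `|v| = |v'|` have the same block at the cut.
-/

def syntacticCon {M β : Type*} [Monoid M] (f : M → β) : Con M where
  r a b := ∀ c d, f (c * a * d) = f (c * b * d)
  iseqv :=
    { refl := fun _ _ _ => rfl
      symm := fun h c d => (h c d).symm
      trans := fun h₁ h₂ c d => (h₁ c d).trans (h₂ c d) }
  mul' {a b a' b'} h h' c d := by
    calc f (c * (a * a') * d)
        _ = f (c * b * (a' * d)) := by simpa only [mul_assoc] using h c (a' * d)
        _ = f (c * (b * b') * d) := by simpa only [mul_assoc] using h' (c * b) d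

lemma apply_eq_of_syntacticCon {M β : Type*} [Monoid M] {f : M → β} {a b : M}
    (h : syntacticCon f a b) : f a = f b := by
  simpa using h 1 1

namespace CoprodM

variable {X Y : Type}

lemma yRel_mul_mul {a b : FM X Y} (h : yRel X Y a b) (c d : FM X Y) :
    yRel X Y (c * a * d) (c * b * d) := by
  obtain ⟨u, v, y₁, y₂, rfl, rfl⟩ := h
  exact ⟨c * u, v * d, y₁, y₂, by simp only [mul_assoc], by simp only [mul_assoc]⟩

lemma apply_eq_of_coCon {β : Type*} {f : FM X Y → β} (hf : ∀ a b, yRel X Y a b → f a = f b)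
    {a b : FM X Y} (h : coCon X Y a b) : f a = f b :=
  apply_eq_of_syntacticCon <|
    Con.conGen_le.2 (fun _ _ hab c d => hf _ _ (yRel_mul_mul hab c d)) h

def ofList (l : List (X ⊕ Y)) : CoprodM X Y := (coCon X Y).mk' (FreeMonoid.ofList l)

lemma ofList_surjective : Function.Surjective (ofList : List (X ⊕ Y) → CoprodM X Y) :=
  (Con.mk'_surjective).comp FreeMonoid.ofList.surjective

lemma ofList_append (l₁ l₂ : List (X ⊕ Y)) :
    ofList (l₁ ++ l₂) = ofList l₁ * ofList l₂ :=
  map_mul _ _ _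

lemma ofList_swap (u v : List (X ⊕ Y)) (y₁ y₂ : Y) :
    ofList (u ++ .inr y₁ :: .inr y₂ :: v) = ofList (u ++ .inr y₂ :: .inr y₁ :: v) :=
  (Con.eq _).2 <| ConGen.Rel.of _ _
    ⟨.ofList u, .ofList v, y₁, y₂, by simp [mul_assoc], by simp [mul_assoc]⟩

lemma len_ofList (l : List (X ⊕ Y)) : len (ofList l) = l.length := by
  show Multiplicative.toAdd (FreeMonoid.lift _ (FreeMonoid.ofList l)) = _
  simp [FreeMonoid.lift_ofList]

lemma psHom_ofList_inr (y : Y) : psHom X Y (ofList [.inr y]) = .pure {y} :=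
  FreeMonoid.lift_eval_of _ _

lemma pre_inr_mul (y : Y) (w : CoprodM X Y) : pre (ofList [.inr y] * w) = {y} + pre w := by
  unfold pre
  rw [map_mul, psHom_ofList_inr]
  cases psHom X Y w <;> rfl

lemma suf_mul_inr (w : CoprodM X Y) (y : Y) : suf (w * ofList [.inr y]) = suf w + {y} := by
  unfold suf
  rw [map_mul, psHom_ofList_inr]
  cases psHom X Y w <;> rfl

noncomputable def cutBlock (l : List (X ⊕ Y)) (k : ℕ) : Multiset Y :=
  suf (ofList (l.take k)) + pre (ofList (l.drop k))

lemma cutBlock_append (l₁ l₂ : List (X ⊕ Y)) :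
    cutBlock (l₁ ++ l₂) l₁.length = suf (ofList l₁) + pre (ofList l₂) := by
  rw [cutBlock, List.take_left, List.drop_left]

lemma cutBlock_swap (u v : List (X ⊕ Y)) (y₁ y₂ : Y) (k : ℕ) :
    cutBlock (u ++ .inr y₁ :: .inr y₂ :: v) k =
      cutBlock (u ++ .inr y₂ :: .inr y₁ :: v) k := by
  rcases le_or_gt k u.length with hk | hk
  · simp only [cutBlock, List.take_append_of_le_length hk, List.drop_append_of_le_length hk,
      ofList_swap]
  obtain ⟨j, rfl⟩ := Nat.exists_eq_add_of_lt hk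
  rw [add_assoc]
  rcases j with _ | j
  · -- the cut falls between the two swapped letters
    simp only [cutBlock, List.take_length_add_append, List.drop_length_add_append, zero_add,
      List.take_succ_cons, List.take_zero, List.drop_succ_cons, List.drop_zero,
      ← List.singleton_append (l := v), ofList_append, suf_mul_inr, pre_inr_mul]
    abel
  · simp only [cutBlock, List.take_length_add_append, List.drop_length_add_append,
      List.take_succ_cons, List.drop_succ_cons, ofList_swap]

lemma cutBlock_eq_of_ofList_eq {l l' : List (X ⊕ Y)} (h : ofList l = ofList l') (k : ℕ) :
    cutBlock l k = cutBlock l' k := by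
  refine apply_eq_of_coCon (f := fun a => cutBlock a.toList k) ?_ ((Con.eq _).1 h)
  rintro _ _ ⟨u, v, y₁, y₂, rfl, rfl⟩
  simpa only [FreeMonoid.toList_mul, FreeMonoid.toList_of, List.append_assoc,
    List.singleton_append, List.cons_append, List.nil_append]
    using cutBlock_swap u.toList v.toList y₁ y₂ k

end CoprodM

theorem coprodM_suf_pre_eq_of_mul_eq_general {X Y : Type} (v w v' w' : CoprodM X Y)
    (h : v * w = v' * w') (hv : len v = len v') :
    suf v + pre w = suf v' + pre w' := by
  obtain ⟨a, rfl⟩ := CoprodM.ofList_surjective v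
  obtain ⟨b, rfl⟩ := CoprodM.ofList_surjective w
  obtain ⟨a', rfl⟩ := CoprodM.ofList_surjective v'
  obtain ⟨b', rfl⟩ := CoprodM.ofList_surjective w'
  rw [CoprodM.len_ofList, CoprodM.len_ofList] at hv
  rw [← CoprodM.ofList_append, ← CoprodM.ofList_append] at h
  rw [← CoprodM.cutBlock_append, ← CoprodM.cutBlock_append, hv,
    CoprodM.cutBlock_eq_of_ofList_eq h]

/-- Lemma 3.5(iv): if `vw = v'w'` with `|v| = |v'|` and `|w| = |w'|`, then
`s(v)p(w) = s(v')p(w')` in `[Y]`. -/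
theorem coprodM_suf_pre_eq_of_mul_eq {X Y : Type} (v w v' w' : CoprodM X Y)
    (h : v * w = v' * w') (hv : len v = len v') (hw : len w = len w') :
    suf v + pre w = suf v' + pre w' :=
  coprodM_suf_pre_eq_of_mul_eq_general v w v' w' h hv
end

section
/- Let a, b ∈ R = k⟨X⟩ * k[Y] be commuting elements of equal total degree n. If at least one of a, b is not top-pure (its degree-n homogeneous component involves an X-variable), then there exists λ ∈ k with ā = λ·b̄, where ā, b̄ are the leading terms in the associated graded algebra (Gr R)_n. -/
/-!
The top-degree parts `ā`, `b̄` commute and, after swapping `a` and `b`, `ā` has a mixed word,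
i.e. one containing an `X`-letter. Every word has a normal form `Y^c` or
`Y^c m Y^d`, where the middle `m` begins and ends with an `X`-letter. If `Y^c m₁` and `m₂ Y^d`
have length at most `n`, the only ways to split `Y^c m₁ Y^z m₂ Y^d` into two words of length
`n` are `(Y^c m₁ Y^s)(Y^t m₂ Y^d)` with `s + t = z`; so, collecting coefficients along a fixed
middle into polynomials over the domain `k[Y]`, the equation `āb̄ = b̄ā` turns into identities
between products of such polynomials. They force `b̄` to have a mixed word as well and make every
slice of `ā` equal to `p / q` times the corresponding slice of `b̄` for fixed `p, q ∈ k[Y]`;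
finally the two-variable polynomials of a middle give `p(Y) q(Z) = p(Z) q(Y)`, so `p / q` is a
scalar.
-/

noncomputable section

namespace MonoidAlgebra

variable {k G : Type*} [Semiring k]

lemma coeff_mul_antidiag_of_subset [Monoid G] (x y : MonoidAlgebra k G) {w : G} (s : Finset (G × G))
    (hs : ∀ p ∈ s, p.1 * p.2 = w)
    (hcover : ∀ p : G × G, p.1 * p.2 = w → x.coeff p.1 * y.coeff p.2 ≠ 0 → p ∈ s) :
    (x * y).coeff w = ∑ p ∈ s, x.coeff p.1 * y.coeff p.2 := by
  classical
  calc (x * y).coeff w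
      = ∑ p ∈ x.coeff.support ×ˢ y.coeff.support with p.1 * p.2 = w,
          x.coeff p.1 * y.coeff p.2 := by
        rw [coeff_mul, Finset.sum_filter, Finset.sum_product]; rfl
    _ = ∑ p ∈ s, x.coeff p.1 * y.coeff p.2 := by
        rw [← Finset.sum_filter_ne_zero, ← Finset.sum_filter_ne_zero s]
        refine Finset.sum_congr (Finset.ext fun p => ?_) fun _ _ => rfl
        simp only [Finset.mem_filter, Finset.mem_product, Finsupp.mem_support_iff]
        exact ⟨fun h => ⟨hcover p h.1.2 h.2, h.2⟩, fun h =>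
          ⟨⟨⟨left_ne_zero_of_mul h.2, right_ne_zero_of_mul h.2⟩, hs p h.1⟩, h.2⟩⟩

variable (deg : G → ℕ)

def homogeneousPart (n : ℕ) (x : MonoidAlgebra k G) : MonoidAlgebra k G :=
  ofCoeff (x.coeff.filter (deg · = n))

def IsHomogeneous (n : ℕ) (x : MonoidAlgebra k G) : Prop :=
  ∀ w ∈ x.coeff.support, deg w = n

variable {deg}

lemma coeff_homogeneousPart (n : ℕ) (x : MonoidAlgebra k G) (w : G) :
    (homogeneousPart deg n x).coeff w = if deg w = n then x.coeff w else 0 :=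
  Finsupp.filter_apply ..

lemma mem_support_homogeneousPart {n : ℕ} {x : MonoidAlgebra k G} {w : G} :
    w ∈ (homogeneousPart deg n x).coeff.support ↔ w ∈ x.coeff.support ∧ deg w = n :=
  Finset.mem_filter

lemma isHomogeneous_homogeneousPart (n : ℕ) (x : MonoidAlgebra k G) :
    IsHomogeneous deg n (homogeneousPart deg n x) :=
  fun _ hw => (mem_support_homogeneousPart.1 hw).2

lemma homogeneousPart_ne_zero {n : ℕ} {x : MonoidAlgebra k G} {w : G}
    (hw : w ∈ x.coeff.support) (hwn : deg w = n) : homogeneousPart deg n x ≠ 0 := fun h => by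
  simpa [h] using mem_support_homogeneousPart.2 ⟨hw, hwn⟩

lemma IsHomogeneous.mapDomain {H : Type*} {deg' : H → ℕ} {f : G → H} (hf : ∀ g, deg' (f g) = deg g)
    {n : ℕ} {x : MonoidAlgebra k G} (hx : IsHomogeneous deg n x) :
    IsHomogeneous deg' n (mapDomain f x) := by
  classical
  intro w hw
  obtain ⟨g, hg, rfl⟩ := Finset.mem_image.1 (Finsupp.mapDomain_support hw)
  rw [hf, hx g hg]

lemma IsHomogeneous.coeff_eq_zero {n : ℕ}
    {x : MonoidAlgebra k G} (hx : IsHomogeneous deg n x) {w : G} (hw : deg w ≠ n) :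
    x.coeff w = 0 :=
  Finsupp.notMem_support_iff.1 fun h => hw (hx w h)

lemma homogeneousPart_mul [Monoid G] (hdeg : ∀ u v, deg (u * v) = deg u + deg v) {n m : ℕ}
    {x y : MonoidAlgebra k G} (hx : ∀ w ∈ x.coeff.support, deg w ≤ n)
    (hy : ∀ w ∈ y.coeff.support, deg w ≤ m) :
    homogeneousPart deg (n + m) (x * y) = homogeneousPart deg n x * homogeneousPart deg m y := by
  classical
  ext w
  set s := (x.coeff.support ×ˢ y.coeff.support).filter
    fun p => p.1 * p.2 = w ∧ deg p.1 = n ∧ deg p.2 = m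
  have hs : ∀ p ∈ s, p.1 * p.2 = w := fun p hp => (Finset.mem_filter.1 hp).2.1
  have hmem : ∀ p : G × G, p.1 * p.2 = w → p.1 ∈ x.coeff.support → p.2 ∈ y.coeff.support →
      deg p.1 = n → deg p.2 = m → p ∈ s := fun p hp h₁ h₂ hn hm =>
    Finset.mem_filter.2 ⟨Finset.mem_product.2 ⟨h₁, h₂⟩, hp, hn, hm⟩
  have hrhs : (homogeneousPart deg n x * homogeneousPart deg m y).coeff w =
      ∑ p ∈ s, x.coeff p.1 * y.coeff p.2 := by
    rw [coeff_mul_antidiag_of_subset _ _ s hs fun p hp hne => ?_]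
    · refine Finset.sum_congr rfl fun p hp => ?_
      obtain ⟨-, -, hn, hm⟩ := Finset.mem_filter.1 hp
      rw [coeff_homogeneousPart, coeff_homogeneousPart, if_pos hn, if_pos hm]
    · obtain ⟨h₁, hn⟩ :=
        mem_support_homogeneousPart.1 (Finsupp.mem_support_iff.2 (left_ne_zero_of_mul hne))
      obtain ⟨h₂, hm⟩ :=
        mem_support_homogeneousPart.1 (Finsupp.mem_support_iff.2 (right_ne_zero_of_mul hne))
      exact hmem p hp h₁ h₂ hn hm
  rw [hrhs, coeff_homogeneousPart]
  split_ifs with hw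
  · refine coeff_mul_antidiag_of_subset _ _ s hs fun p hp hne => ?_
    have h₁ := Finsupp.mem_support_iff.2 (left_ne_zero_of_mul hne)
    have h₂ := Finsupp.mem_support_iff.2 (right_ne_zero_of_mul hne)
    have hsum : deg p.1 + deg p.2 = n + m := by rw [← hdeg, hp, hw]
    have := hx _ h₁
    have := hy _ h₂
    exact hmem p hp h₁ h₂ (by omega) (by omega)
  · refine (Finset.sum_eq_zero fun p hp => absurd ?_ hw).symm
    obtain ⟨-, hp, hn, hm⟩ := Finset.mem_filter.1 hp
    rw [← hp, hdeg, hn, hm]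

end MonoidAlgebra

namespace MvPolynomial

/-- In `K[Z][Y]`, `C q * map C p` is `q(Z) p(Y)`. -/
lemma exists_eq_smul_of_C_mul_map_C_eq {σ K : Type*} [Field K] {p q : MvPolynomial σ K}
    (hq : q ≠ 0) (h : C q * map C p = C p * map C q) : ∃ a : K, p = a • q := by
  obtain ⟨e, he⟩ := ne_zero_iff.1 hq
  have hcoeff := congrArg (coeff e) h
  rw [coeff_C_mul, coeff_C_mul, coeff_map, coeff_map, mul_comm, mul_comm p, C_mul', C_mul']
    at hcoeff
  refine ⟨(coeff e q)⁻¹ * coeff e p, ?_⟩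
  rw [mul_smul, hcoeff, inv_smul_smul₀ he]

end MvPolynomial

namespace CoprodM

variable {X Y : Type}

/-- The word `x₀ Y^c₁ x₁ ⋯ Y^cᵣ xᵣ`, beginning and ending with an `X`-letter. -/
abbrev Middle (X Y : Type) := X × List ((Y →₀ ℕ) × X)

namespace Middle

def len (m : Middle X Y) : ℕ := 1 + (m.2.map fun p => p.1.degree + 1).sum

lemma one_le_len (m : Middle X Y) : 1 ≤ m.len := by simp [len]

/-- The concatenation `m Y^z m'`. -/
def join (m : Middle X Y) (z : Y →₀ ℕ) (m' : Middle X Y) : Middle X Y :=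
  (m.1, m.2 ++ (z, m'.1) :: m'.2)

lemma join_assoc (m₁ m₂ m₃ : Middle X Y) (z₁ z₂ : Y →₀ ℕ) :
    (m₁.join z₁ m₂).join z₂ m₃ = m₁.join z₁ (m₂.join z₂ m₃) := by
  simp [join]

lemma len_join (m m' : Middle X Y) (z : Y →₀ ℕ) :
    (m.join z m').len = m.len + z.degree + m'.len := by
  simp only [len, join, List.map_append, List.map_cons, List.sum_append, List.sum_cons]
  ring

lemma join_eq_join {m₁ m₁' m₂ m₂' : Middle X Y} {z₁ z₂ : Y →₀ ℕ}
    (h : m₁.join z₁ m₁' = m₂.join z₂ m₂') :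
    (m₁ = m₂ ∧ z₁ = z₂ ∧ m₁' = m₂') ∨ (∃ r, m₂ = m₁.join z₁ r ∧ m₁' = r.join z₂ m₂') ∨
      (∃ r, m₁ = m₂.join z₂ r ∧ m₂' = r.join z₁ m₁') := by
  obtain ⟨x₁, l₁⟩ := m₁
  obtain ⟨x₂, l₂⟩ := m₂
  simp only [join, Prod.mk.injEq] at h
  obtain ⟨rfl, h⟩ := h
  rcases List.append_eq_append_iff.1 h with ⟨as, rfl, has⟩ | ⟨bs, rfl, hbs⟩
  · rcases List.cons_eq_append_iff.1 has with ⟨rfl, hm⟩ | ⟨as', rfl, hm⟩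
    · simp only [List.cons.injEq, Prod.mk.injEq] at hm
      exact Or.inl ⟨by simp, hm.1.1.symm, (Prod.ext hm.1.2 hm.2).symm⟩
    · exact Or.inr (Or.inl ⟨(m₁'.1, as'), by simp [join], Prod.ext rfl hm⟩)
  · rcases List.cons_eq_append_iff.1 hbs with ⟨rfl, hm⟩ | ⟨bs', rfl, hm⟩
    · simp only [List.cons.injEq, Prod.mk.injEq] at hm
      exact Or.inl ⟨by simp, hm.1.1, Prod.ext hm.1.2 hm.2⟩
    · exact Or.inr (Or.inr ⟨(m₂'.1, bs'), by simp [join], Prod.ext rfl hm⟩)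

end Middle

/-- Normal forms in `⟨X⟩ * [Y]`: `mixed c m d` stands for `Y^c m Y^d`. -/
inductive NormalForm (X Y : Type) where
  | pure (c : Y →₀ ℕ)
  | mixed (c : Y →₀ ℕ) (m : Middle X Y) (d : Y →₀ ℕ)

namespace NormalForm

def mul : NormalForm X Y → NormalForm X Y → NormalForm X Y
  | pure c, pure d => pure (c + d)
  | pure c, mixed p m s => mixed (c + p) m s
  | mixed p m s, pure d => mixed p m (s + d)
  | mixed p m s, mixed p' m' s' => mixed p (m.join (s + p') m') s'

instance : Mul (NormalForm X Y) := ⟨mul⟩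
instance : One (NormalForm X Y) := ⟨pure 0⟩

@[simp] lemma pure_mul_pure (c d : Y →₀ ℕ) : (pure c : NormalForm X Y) * pure d = pure (c + d) :=
  rfl

@[simp] lemma pure_mul_mixed (c p : Y →₀ ℕ) (m : Middle X Y) (s : Y →₀ ℕ) :
    (pure c : NormalForm X Y) * mixed p m s = mixed (c + p) m s := rfl

@[simp] lemma mixed_mul_pure (p : Y →₀ ℕ) (m : Middle X Y) (s d : Y →₀ ℕ) :
    (mixed p m s : NormalForm X Y) * pure d = mixed p m (s + d) := rfl

@[simp] lemma mixed_mul_mixed (p : Y →₀ ℕ) (m : Middle X Y) (s p' : Y →₀ ℕ) (m' : Middle X Y)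
    (s' : Y →₀ ℕ) : (mixed p m s : NormalForm X Y) * mixed p' m' s' =
      mixed p (m.join (s + p') m') s' := rfl

lemma one_def : (1 : NormalForm X Y) = pure 0 := rfl

instance : Monoid (NormalForm X Y) where
  mul_assoc a b c := by
    rcases a <;> rcases b <;> rcases c <;> simp [add_assoc, Middle.join_assoc]
  one_mul a := by rcases a <;> simp [one_def]
  mul_one a := by rcases a <;> simp [one_def]

def len : NormalForm X Y → ℕ
  | pure c => c.degree
  | mixed c m d => c.degree + m.len + d.degree

@[simp] lemma len_pure (c : Y →₀ ℕ) : (pure c : NormalForm X Y).len = c.degree := rfl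

@[simp] lemma len_mixed (c : Y →₀ ℕ) (m : Middle X Y) (d : Y →₀ ℕ) :
    (mixed c m d : NormalForm X Y).len = c.degree + m.len + d.degree := rfl

lemma len_mul (u v : NormalForm X Y) : (u * v).len = u.len + v.len := by
  rcases u <;> rcases v <;> simp only [pure_mul_pure, pure_mul_mixed, mixed_mul_pure,
    mixed_mul_mixed, len_pure, len_mixed, Middle.len_join, map_add] <;> ring

def ofLetter : X ⊕ Y → NormalForm X Y
  | .inl x => mixed 0 (x, []) 0
  | .inr y => pure (.single y 1)

end NormalForm

def letter (a : X ⊕ Y) : CoprodM X Y := (FreeMonoid.of a : FM X Y)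

def toNormalForm : CoprodM X Y →* NormalForm X Y :=
  Con.lift _ (FreeMonoid.lift NormalForm.ofLetter) <| Con.conGen_le.2 <| by
    rintro _ _ ⟨u, v, y₁, y₂, rfl, rfl⟩
    have hswap : NormalForm.ofLetter (X := X) (.inr y₁) * .ofLetter (.inr y₂) =
        .ofLetter (.inr y₂) * .ofLetter (.inr y₁) := by
      simp [NormalForm.ofLetter, add_comm]
    simp only [Con.ker_rel, map_mul, FreeMonoid.lift_eval_of, mul_assoc _ (NormalForm.ofLetter _),
      hswap]

lemma toNormalForm_letter (a : X ⊕ Y) : toNormalForm (letter a) = .ofLetter a := rfl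

lemma len_letter (a : X ⊕ Y) : len (letter a) = 1 := rfl

lemma len_mul (u v : CoprodM X Y) : len (u * v) = len u + len v := by
  simp [len]

lemma len_toNormalForm (w : CoprodM X Y) : (toNormalForm w).len = len w := by
  induction w using Con.induction_on with | _ l
  induction l using FreeMonoid.inductionOn' with
  | one => rfl
  | of_mul a l ih =>
    change (toNormalForm (letter a * (l : CoprodM X Y))).len = len (letter a * (l : CoprodM X Y))
    rw [map_mul, NormalForm.len_mul, len_mul, toNormalForm_letter, len_letter, ih]
    rcases a <;> simp [NormalForm.ofLetter, Middle.len]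

lemma yEmb_ofList_eq_of_perm {l l' : List Y} (h : l.Perm l') :
    yEmb X Y (FreeMonoid.ofList l) = yEmb X Y (FreeMonoid.ofList l') := by
  induction h with
  | nil => rfl
  | cons y _ ih => simp only [FreeMonoid.ofList_cons, map_mul, ih]
  | swap y₁ y₂ l =>
    refine (Con.eq _).2 (ConGen.Rel.of _ _ ⟨1, FreeMonoid.map Sum.inr (.ofList l), y₂, y₁, ?_, ?_⟩)
      <;> simp [FreeMonoid.ofList_cons, mul_assoc]
  | trans _ _ ih₁ ih₂ => exact ih₁.trans ih₂

def monomial (c : Y →₀ ℕ) : CoprodM X Y := pureElt (Finsupp.toMultiset c)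

lemma monomial_zero : (monomial 0 : CoprodM X Y) = 1 := by
  simp [monomial, pureElt]

lemma monomial_add (c d : Y →₀ ℕ) :
    (monomial (c + d) : CoprodM X Y) = monomial c * monomial d := by
  rw [monomial, monomial, monomial, pureElt, pureElt, pureElt, ← map_mul,
    ← FreeMonoid.ofList_append]
  exact yEmb_ofList_eq_of_perm (by rw [← Multiset.coe_eq_coe]; simp [← Multiset.coe_add])

lemma monomial_single (y : Y) : (monomial (.single y 1) : CoprodM X Y) = letter (.inr y) := by
  rw [monomial, Finsupp.toMultiset_single, one_smul, pureElt, Multiset.toList_singleton]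
  rfl

def ofMiddle (m : Middle X Y) : CoprodM X Y :=
  letter (.inl m.1) * (m.2.map fun p => monomial p.1 * letter (.inl p.2)).prod

def ofNormalForm : NormalForm X Y → CoprodM X Y
  | .pure c => monomial c
  | .mixed c m d => monomial c * ofMiddle m * monomial d

lemma ofNormalForm_ofLetter_mul (a : X ⊕ Y) (u : NormalForm X Y) :
    ofNormalForm (.ofLetter a * u) = letter a * ofNormalForm u := by
  rcases a with x | y <;> rcases u with c | ⟨c, ⟨x', l⟩, d⟩ <;>
    simp [NormalForm.ofLetter, ofNormalForm, ofMiddle, Middle.join, monomial_zero, monomial_add,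
      monomial_single, mul_assoc]

lemma ofNormalForm_toNormalForm (w : CoprodM X Y) : ofNormalForm (toNormalForm w) = w := by
  induction w using Con.induction_on with | _ l
  induction l using FreeMonoid.inductionOn' with
  | one => simp [ofNormalForm, monomial_zero]
  | of_mul a l ih =>
    change ofNormalForm (toNormalForm (letter a * (l : CoprodM X Y))) = letter a * (l : CoprodM X Y)
    rw [map_mul, toNormalForm_letter, ofNormalForm_ofLetter_mul, ih]

lemma toNormalForm_injective : Function.Injective (toNormalForm (X := X) (Y := Y)) :=
  Function.LeftInverse.injective ofNormalForm_toNormalForm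

lemma exists_toNormalForm_eq_mixed {w : CoprodM X Y} (hw : ¬ IsPure w) :
    ∃ c m d, toNormalForm w = .mixed c m d := by
  rcases hu : toNormalForm w with c | ⟨c, m, d⟩
  · refine absurd ?_ hw
    rw [← ofNormalForm_toNormalForm w, hu]
    exact ⟨_, rfl⟩
  · exact ⟨c, m, d, rfl⟩

end CoprodM

namespace CoprodM.NormalForm

open MvPolynomial Finset.HasAntidiagonal
open MonoidAlgebra (IsHomogeneous)

variable {X Y : Type} {k : Type*}

lemma eq_mixed_of_mul_eq_mixed_join {u v : NormalForm X Y} {c z d : Y →₀ ℕ}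
    {m₁ m₂ : Middle X Y} (h : u * v = mixed c (m₁.join z m₂) d)
    (hu : c.degree + m₁.len ≤ u.len) (hv : m₂.len + d.degree ≤ v.len) :
    ∃ s t, s + t = z ∧ u = mixed c m₁ s ∧ v = mixed t m₂ d := by
  have := m₁.one_le_len
  have := m₂.one_le_len
  rcases u with c' | ⟨c', m', s'⟩ <;> rcases v with c'' | ⟨c'', m'', d''⟩ <;>
    simp only [pure_mul_pure, pure_mul_mixed, mixed_mul_pure, mixed_mul_mixed, reduceCtorEq,
      mixed.injEq, len_pure, len_mixed] at h hu hv
  · obtain ⟨rfl, -, -⟩ := h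
    rw [map_add] at hu
    omega
  · obtain ⟨-, -, rfl⟩ := h
    rw [map_add] at hv
    omega
  · obtain ⟨rfl, h, rfl⟩ := h
    rcases Middle.join_eq_join h with ⟨rfl, rfl, rfl⟩ | ⟨r, rfl, -⟩ | ⟨r, -, rfl⟩
    · exact ⟨s', c'', rfl, rfl, rfl⟩
    · have := r.one_le_len
      rw [Middle.len_join, map_add] at hu
      omega
    · have := r.one_le_len
      rw [Middle.len_join, map_add] at hv
      omega

lemma eq_pure_of_mul_eq_mixed {u v : NormalForm X Y} {c d : Y →₀ ℕ} {m : Middle X Y}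
    (h : u * v = mixed c m d) (hv : m.len + d.degree ≤ v.len) :
    ∃ s t, s + t = c ∧ u = pure s ∧ v = mixed t m d := by
  rcases u with c' | ⟨c', m', s'⟩ <;> rcases v with c'' | ⟨c'', m'', d''⟩ <;>
    simp only [pure_mul_pure, pure_mul_mixed, mixed_mul_pure, mixed_mul_mixed, reduceCtorEq,
      mixed.injEq, len_pure, len_mixed] at h hv
  · obtain ⟨rfl, rfl, rfl⟩ := h
    exact ⟨c', c'', rfl, rfl, rfl⟩
  · obtain ⟨-, rfl, rfl⟩ := h
    have := m'.one_le_len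
    rw [map_add] at hv
    omega
  · obtain ⟨-, rfl, rfl⟩ := h
    have := m'.one_le_len
    rw [Middle.len_join, map_add] at hv
    omega

section CommSemiring

variable [CommSemiring k] (A : MonoidAlgebra k (NormalForm X Y))

/-- `∑_d A(Y^c m Y^d) Y^d`. -/
def suffixPoly (c : Y →₀ ℕ) (m : Middle X Y) : MvPolynomial Y k :=
  AddMonoidAlgebra.ofCoeff <| A.coeff.comapDomain (mixed c m) fun _ _ _ _ h => (mixed.inj h).2.2

/-- `∑_c A(Y^c m Y^d) Y^c`. -/
def prefixPoly (m : Middle X Y) (d : Y →₀ ℕ) : MvPolynomial Y k :=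
  AddMonoidAlgebra.ofCoeff <|
    A.coeff.comapDomain (fun c => mixed c m d) fun _ _ _ _ h => (mixed.inj h).1

def purePoly : MvPolynomial Y k :=
  AddMonoidAlgebra.ofCoeff <| A.coeff.comapDomain pure fun _ _ _ _ h => pure.inj h

/-- `∑_{c,d} A(Y^c m Y^d) Y^c Z^d`, with the prefix variables `Y` outside and the suffix
variables `Z` in the coefficient ring. -/
def middlePoly (m : Middle X Y) : MvPolynomial Y (MvPolynomial Y k) :=
  AddMonoidAlgebra.ofCoeff <| (Finsupp.curry <| A.coeff.comapDomain (fun p => mixed p.1 m p.2)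
    fun _ _ _ _ h => Prod.ext (mixed.inj h).1 (mixed.inj h).2.2).mapRange
      AddMonoidAlgebra.ofCoeff rfl

variable {A}

@[simp] lemma coeff_suffixPoly (c : Y →₀ ℕ) (m : Middle X Y) (d : Y →₀ ℕ) :
    coeff d (suffixPoly A c m) = A.coeff (mixed c m d) := rfl

@[simp] lemma coeff_prefixPoly (m : Middle X Y) (d c : Y →₀ ℕ) :
    coeff c (prefixPoly A m d) = A.coeff (mixed c m d) := rfl

@[simp] lemma coeff_purePoly (c : Y →₀ ℕ) : coeff c (purePoly A) = A.coeff (pure c) := rfl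

@[simp] lemma coeff_middlePoly (m : Middle X Y) (c : Y →₀ ℕ) :
    coeff c (middlePoly A m) = suffixPoly A c m :=
  MvPolynomial.ext _ _ fun _ => Finsupp.curry_apply ..

lemma coeff_coeff_map_C_mul_middlePoly [DecidableEq Y] (r : MvPolynomial Y k) (m : Middle X Y)
    (c d : Y →₀ ℕ) :
    coeff d (coeff c (map C r * middlePoly A m)) = coeff c (r * prefixPoly A m d) := by
  rw [coeff_mul, coeff_sum, coeff_mul]
  refine Finset.sum_congr rfl fun p _ => ?_
  rw [coeff_map, coeff_middlePoly, coeff_C_mul, coeff_suffixPoly, coeff_prefixPoly]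

variable {B : MonoidAlgebra k (NormalForm X Y)} {n : ℕ}

lemma coeff_suffixPoly_mul_prefixPoly (hA : IsHomogeneous NormalForm.len n A)
    (hB : IsHomogeneous NormalForm.len n B) {c d : Y →₀ ℕ} {m₁ m₂ : Middle X Y}
    (h₁ : c.degree + m₁.len ≤ n) (h₂ : m₂.len + d.degree ≤ n) (z : Y →₀ ℕ) :
    coeff z (suffixPoly A c m₁ * prefixPoly B m₂ d) =
      (A * B).coeff (mixed c (m₁.join z m₂) d) := by
  classical
  rw [coeff_mul, MonoidAlgebra.coeff_mul_antidiag_of_subset A B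
    ((antidiagonal z).image fun p => (mixed c m₁ p.1, mixed p.2 m₂ d)), Finset.sum_image]
  · rfl
  · intro p _ q _ h
    simp only [Prod.mk.injEq, mixed.injEq] at h
    exact Prod.ext h.1.2.2 h.2.1
  · intro _ h
    obtain ⟨p, hp, rfl⟩ := Finset.mem_image.1 h
    simp [mem_antidiagonal.1 hp]
  · rintro ⟨u, v⟩ huv hne
    obtain ⟨s, t, hst, rfl, rfl⟩ := eq_mixed_of_mul_eq_mixed_join huv
      (hA u (Finsupp.mem_support_iff.2 (left_ne_zero_of_mul hne)) ▸ h₁)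
      (hB v (Finsupp.mem_support_iff.2 (right_ne_zero_of_mul hne)) ▸ h₂)
    exact Finset.mem_image.2 ⟨(s, t), mem_antidiagonal.2 hst, rfl⟩

lemma coeff_purePoly_mul_prefixPoly (hB : IsHomogeneous NormalForm.len n B) {d : Y →₀ ℕ}
    {m : Middle X Y}
    (h : m.len + d.degree ≤ n) (c : Y →₀ ℕ) :
    coeff c (purePoly A * prefixPoly B m d) = (A * B).coeff (mixed c m d) := by
  classical
  rw [coeff_mul, MonoidAlgebra.coeff_mul_antidiag_of_subset A B
    ((antidiagonal c).image fun p => (pure p.1, mixed p.2 m d)), Finset.sum_image]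
  · rfl
  · intro p _ q _ h
    simp only [Prod.mk.injEq, pure.injEq, mixed.injEq] at h
    exact Prod.ext h.1 h.2.1
  · intro _ h
    obtain ⟨p, hp, rfl⟩ := Finset.mem_image.1 h
    simp [mem_antidiagonal.1 hp]
  · rintro ⟨u, v⟩ huv hne
    obtain ⟨s, t, hst, rfl, rfl⟩ := eq_pure_of_mul_eq_mixed huv
      (hB v (Finsupp.mem_support_iff.2 (right_ne_zero_of_mul hne)) ▸ h)
    exact Finset.mem_image.2 ⟨(s, t), mem_antidiagonal.2 hst, rfl⟩

lemma suffixPoly_eq_zero (hA : IsHomogeneous NormalForm.len n A) {c : Y →₀ ℕ} {m : Middle X Y}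
    (h : n < c.degree + m.len) : suffixPoly A c m = 0 :=
  MvPolynomial.ext _ _ fun d => hA.coeff_eq_zero (by simp only [len_mixed]; omega)

lemma prefixPoly_eq_zero (hA : IsHomogeneous NormalForm.len n A) {m : Middle X Y}
    {d : Y →₀ ℕ} (h : n < m.len + d.degree) : prefixPoly A m d = 0 :=
  MvPolynomial.ext _ _ fun c => hA.coeff_eq_zero (by simp only [len_mixed]; omega)

variable (hAB : A * B = B * A) (hA : IsHomogeneous NormalForm.len n A)
  (hB : IsHomogeneous NormalForm.len n B)
include hAB hA hB

lemma suffixPoly_mul_prefixPoly_comm (c : Y →₀ ℕ) (m₁ m₂ : Middle X Y) (d : Y →₀ ℕ) :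
    suffixPoly A c m₁ * prefixPoly B m₂ d = suffixPoly B c m₁ * prefixPoly A m₂ d := by
  by_cases h₁ : c.degree + m₁.len ≤ n
  · by_cases h₂ : m₂.len + d.degree ≤ n
    · refine MvPolynomial.ext _ _ fun z => ?_
      rw [coeff_suffixPoly_mul_prefixPoly hA hB h₁ h₂, coeff_suffixPoly_mul_prefixPoly hB hA h₁ h₂,
        hAB]
    · rw [prefixPoly_eq_zero hA (not_le.1 h₂), prefixPoly_eq_zero hB (not_le.1 h₂), mul_zero,
        mul_zero]
  · rw [suffixPoly_eq_zero hA (not_le.1 h₁), suffixPoly_eq_zero hB (not_le.1 h₁), zero_mul,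
      zero_mul]

lemma purePoly_mul_prefixPoly_comm (m : Middle X Y) (d : Y →₀ ℕ) :
    purePoly A * prefixPoly B m d = purePoly B * prefixPoly A m d := by
  by_cases h : m.len + d.degree ≤ n
  · refine MvPolynomial.ext _ _ fun c => ?_
    rw [coeff_purePoly_mul_prefixPoly hB h, coeff_purePoly_mul_prefixPoly hA h, hAB]
  · rw [prefixPoly_eq_zero hA (not_le.1 h), prefixPoly_eq_zero hB (not_le.1 h), mul_zero,
      mul_zero]

end CommSemiring

section Field

variable [Field k] {A B : MonoidAlgebra k (NormalForm X Y)} {n : ℕ}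
  (hAB : A * B = B * A) (hA : IsHomogeneous NormalForm.len n A)
  (hB : IsHomogeneous NormalForm.len n B)
include hAB hA hB

lemma exists_coeff_mixed_ne_zero_of_commute (hB₀ : B ≠ 0) {c₀ d₀ : Y →₀ ℕ} {m₀ : Middle X Y}
    (hmix : A.coeff (mixed c₀ m₀ d₀) ≠ 0) : ∃ c m d, B.coeff (mixed c m d) ≠ 0 := by
  by_contra! hpure
  have hR₀ : prefixPoly B m₀ d₀ = 0 := MvPolynomial.ext _ _ fun c => hpure c m₀ d₀
  have hP : purePoly B ≠ 0 := by
    obtain ⟨w, hw⟩ : ∃ w, B.coeff w ≠ 0 := by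
      by_contra! h
      exact hB₀ (MonoidAlgebra.ext (Finsupp.ext h))
    rcases w with s | ⟨c, m, d⟩
    · exact ne_zero_iff.2 ⟨s, hw⟩
    · exact absurd (hpure c m d) hw
  have hR : prefixPoly A m₀ d₀ ≠ 0 := ne_zero_iff.2 ⟨c₀, hmix⟩
  have := purePoly_mul_prefixPoly_comm hAB hA hB m₀ d₀
  rw [hR₀, mul_zero] at this
  exact mul_ne_zero hP hR this.symm

/-- Writing `p, q` for the prefix polynomials of `A, B` at a mixed word of `B`, and `F_A, F_B`
for the middle polynomials at a mixed word `Y^c₀ m₀ Y^d₀` of `A`, commutation gives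
`q(Z) F_A = p(Z) F_B` and `q(Y) F_A = p(Y) F_B`, hence `q(Z) p(Y) = p(Z) q(Y)`. -/
lemma exists_prefixPoly_eq_smul {c₀ d₀ c₁ d₁ : Y →₀ ℕ} {m₀ m₁ : Middle X Y}
    (hmixA : A.coeff (mixed c₀ m₀ d₀) ≠ 0) (hmixB : B.coeff (mixed c₁ m₁ d₁) ≠ 0) :
    ∃ a : k, prefixPoly A m₁ d₁ = a • prefixPoly B m₁ d₁ := by
  classical
  set p := prefixPoly A m₁ d₁
  set q := prefixPoly B m₁ d₁
  have hq : q ≠ 0 := ne_zero_iff.2 ⟨c₁, hmixB⟩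
  have hsuffix : ∀ c m, q * suffixPoly A c m = p * suffixPoly B c m := fun c m => by
    rw [mul_comm, suffixPoly_mul_prefixPoly_comm hAB hA hB, mul_comm]
  have hsuffixB : suffixPoly B c₀ m₀ ≠ 0 := by
    have := mul_ne_zero hq (ne_zero_iff.2 ⟨d₀, hmixA⟩ : suffixPoly A c₀ m₀ ≠ 0)
    rw [hsuffix] at this
    exact right_ne_zero_of_mul this
  have hprefix : ∀ d, q * prefixPoly A m₀ d = p * prefixPoly B m₀ d := fun d => by
    refine mul_left_cancel₀ hsuffixB ?_
    calc suffixPoly B c₀ m₀ * (q * prefixPoly A m₀ d)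
        = q * (suffixPoly A c₀ m₀ * prefixPoly B m₀ d) := by
          rw [suffixPoly_mul_prefixPoly_comm hAB hA hB]; ring
      _ = suffixPoly B c₀ m₀ * (p * prefixPoly B m₀ d) := by
          rw [← mul_assoc, hsuffix]; ring
  have hZ : C q * middlePoly A m₀ = C p * middlePoly B m₀ :=
    MvPolynomial.ext _ _ fun c => by
      rw [coeff_C_mul, coeff_C_mul, coeff_middlePoly, coeff_middlePoly, hsuffix]
  have hY : map C q * middlePoly A m₀ = map C p * middlePoly B m₀ :=
    MvPolynomial.ext _ _ fun c => MvPolynomial.ext _ _ fun d => by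
      rw [coeff_coeff_map_C_mul_middlePoly, coeff_coeff_map_C_mul_middlePoly, hprefix]
  have hF : middlePoly B m₀ ≠ 0 := ne_zero_iff.2 ⟨c₀, by rwa [coeff_middlePoly]⟩
  refine exists_eq_smul_of_C_mul_map_C_eq hq (mul_right_cancel₀ hF ?_)
  calc C q * map C p * middlePoly B m₀ = map C q * (C q * middlePoly A m₀) := by
        rw [mul_assoc, ← hY, mul_left_comm]
    _ = C p * map C q * middlePoly B m₀ := by
        rw [hZ, mul_left_comm, mul_assoc]

theorem eq_smul_of_commute (hB₀ : B ≠ 0) {c₀ d₀ : Y →₀ ℕ} {m₀ : Middle X Y}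
    (hmix : A.coeff (mixed c₀ m₀ d₀) ≠ 0) : ∃ a : k, A = a • B := by
  obtain ⟨c₁, m₁, d₁, hmixB⟩ := exists_coeff_mixed_ne_zero_of_commute hAB hA hB hB₀ hmix
  obtain ⟨a, ha⟩ := exists_prefixPoly_eq_smul hAB hA hB hmix hmixB
  have hq : prefixPoly B m₁ d₁ ≠ 0 := ne_zero_iff.2 ⟨c₁, hmixB⟩
  have cancel : ∀ P Q : MvPolynomial Y k,
      P * prefixPoly B m₁ d₁ = Q * prefixPoly A m₁ d₁ → P = a • Q := fun P Q h =>
    mul_right_cancel₀ hq (by rw [h, ha, smul_mul_assoc, mul_smul_comm])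
  refine ⟨a, MonoidAlgebra.ext (Finsupp.ext fun w => ?_)⟩
  rcases w with s | ⟨c, m, d⟩
  · simpa using congrArg (coeff s) (cancel _ _ (purePoly_mul_prefixPoly_comm hAB hA hB m₁ d₁))
  · simpa using congrArg (coeff d) (cancel _ _ (suffixPoly_mul_prefixPoly_comm hAB hA hB c m m₁ d₁))

end Field

end CoprodM.NormalForm

namespace CoprodM

open MonoidAlgebra

variable {X Y : Type} {k : Type*} [Field k]

theorem exists_eq_smul_of_commute {a b : MonoidAlgebra k (CoprodM X Y)} {n : ℕ}
    (hab : a * b = b * a) (ha : IsHomogeneous len n a) (hb : IsHomogeneous len n b)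
    (hb₀ : b ≠ 0) {w : CoprodM X Y} (hw : w ∈ a.coeff.support) (hwp : ¬ IsPure w) :
    ∃ r : k, a = r • b := by
  have hinj : Function.Injective (mapDomain (R := k) (toNormalForm (X := X) (Y := Y))) :=
    mapDomain_injective toNormalForm_injective
  obtain ⟨c, m, d, hw'⟩ := exists_toNormalForm_eq_mixed hwp
  obtain ⟨r, hr⟩ := NormalForm.eq_smul_of_commute (A := mapDomain toNormalForm a)
    (by rw [← mapDomain_mul, hab, mapDomain_mul]) (ha.mapDomain len_toNormalForm)
    (hb.mapDomain len_toNormalForm) (hinj.ne_iff' (mapDomain_zero _) |>.2 hb₀)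
    (c₀ := c) (m₀ := m) (d₀ := d)
    (by rwa [← hw', coeff_mapDomain, Finsupp.mapDomain_apply toNormalForm_injective,
      ← Finsupp.mem_support_iff])
  exact ⟨r, hinj (by rw [hr, mapDomain_smul])⟩

end CoprodM

end

open MonoidAlgebra

/-- Lemma 4.2: commuting elements of equal total degree `n`, at least one of
which is not top-pure, have proportional leading terms. -/
theorem coprod_leading_terms_proportional_of_not_top_pure {X Y k : Type} [Field k]
    (a b : MonoidAlgebra k (CoprodM X Y)) (n : ℕ)
    (hcomm : a * b = b * a)
    (hda : (∃ w ∈ a.coeff.support, len w = n) ∧ ∀ w ∈ a.coeff.support, len w ≤ n)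
    (hdb : (∃ w ∈ b.coeff.support, len w = n) ∧ ∀ w ∈ b.coeff.support, len w ≤ n)
    (hnp : (∃ w ∈ a.coeff.support, len w = n ∧ ¬ IsPure w) ∨
           (∃ w ∈ b.coeff.support, len w = n ∧ ¬ IsPure w)) :
    ∃ lam : k, ∀ w : CoprodM X Y, len w = n → a.coeff w = lam * b.coeff w := by
  set a' := homogeneousPart len n a
  set b' := homogeneousPart len n b
  have hcomm' : a' * b' = b' * a' := by
    rw [← homogeneousPart_mul CoprodM.len_mul hda.2 hdb.2, hcomm,
      homogeneousPart_mul CoprodM.len_mul hdb.2 hda.2]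
  have ha₀ : a' ≠ 0 := let ⟨_, hw, hwn⟩ := hda.1; homogeneousPart_ne_zero hw hwn
  have hb₀ : b' ≠ 0 := let ⟨_, hw, hwn⟩ := hdb.1; homogeneousPart_ne_zero hw hwn
  obtain ⟨lam, hlam⟩ : ∃ lam : k, a' = lam • b' := by
    rcases hnp with ⟨w, hw, hwn, hwp⟩ | ⟨w, hw, hwn, hwp⟩
    · exact CoprodM.exists_eq_smul_of_commute hcomm' (isHomogeneous_homogeneousPart n a)
        (isHomogeneous_homogeneousPart n b) hb₀
        (mem_support_homogeneousPart.2 ⟨hw, hwn⟩) hwp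
    · obtain ⟨r, hr⟩ := CoprodM.exists_eq_smul_of_commute hcomm'.symm
        (isHomogeneous_homogeneousPart n b) (isHomogeneous_homogeneousPart n a) ha₀
        (mem_support_homogeneousPart.2 ⟨hw, hwn⟩) hwp
      have hr₀ : r ≠ 0 := by rintro rfl; exact hb₀ (by simpa using hr)
      exact ⟨r⁻¹, by rw [hr, inv_smul_smul₀ hr₀]⟩
  refine ⟨lam, fun w hw => ?_⟩
  simpa [a', b', coeff_homogeneousPart, hw] using congrArg (·.coeff w) hlam
end
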